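/- arXiv:2506.01076 — 3 statements merged into one kernel-verified Lean document; each statement's English description precedes it below -/
import Mathlib

section
/- For every natural number k, there is no value v such that Ω_k ⇓ v in the big-step semantics of xCL, and there is no value v such that Ω_k →* v in the call-by-name small-step semantics; i.e. all the terms Ω_k diverge. -/
/-- Closed terms of extended combinatory logic (xCL). -/
inductive Tm : Type
  | S : Tm
  | K : Tm
  | I : Tm
  | S1 : Tm → Tm
  | K1 : Tm → Tm
  | S2 : Tm → Tm → Tm
  | app : Tm → Tm → Tm

/-- A term is a value iff its topmost constructor is one of `S, K, I, S', K', S''`. -/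
def Tm.IsValue : Tm → Prop
  | .app _ _ => False
  | _ => True

/-- Labeled transitions `t ─s→ t'` of call-by-name xCL. -/
inductive LStep : Tm → Tm → Tm → Prop
  | S (t : Tm) : LStep .S t (.S1 t)
  | S1 (t s : Tm) : LStep (.S1 t) s (.S2 t s)
  | S2 (t s r : Tm) : LStep (.S2 t s) r (.app (.app t r) (.app s r))
  | K (t : Tm) : LStep .K t (.K1 t)
  | K1 (t s : Tm) : LStep (.K1 t) s t
  | I (t : Tm) : LStep .I t t

/-- Unlabeled small-step transitions `t → t'` of call-by-name xCL. -/
inductive Step : Tm → Tm → Prop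
  | appL {t t' : Tm} (s : Tm) : Step t t' → Step (.app t s) (.app t' s)
  | beta {t t' s : Tm} : LStep t s t' → Step (.app t s) t'

/-- Big-step semantics `t ⇓ v` of call-by-name xCL. -/
inductive Big : Tm → Tm → Prop
  | val {v : Tm} : v.IsValue → Big v v
  | appI {s t v : Tm} : Big s .I → Big t v → Big (.app s t) v
  | appK {s t : Tm} : Big s .K → Big (.app s t) (.K1 t)
  | appS {s t : Tm} : Big s .S → Big (.app s t) (.S1 t)
  | appK1 {s t r v : Tm} : Big s (.K1 r) → Big r v → Big (.app s t) v
  | appS1 {s t r : Tm} : Big s (.S1 r) → Big (.app s t) (.S2 r t)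
  | appS2 {s t r q v : Tm} :
      Big s (.S2 r q) → Big (.app (.app r t) (.app q t)) v → Big (.app s t) v

/-- `I^0(u) = u`, `I^{k+1}(u) = I (I^k(u))`. -/
def Ipow : ℕ → Tm → Tm
  | 0, u => u
  | k + 1, u => .app .I (Ipow k u)

/-- The term `(S I) I`. -/
def SII : Tm := .app (.app .S .I) .I

/-- `Ω_k = (I^k((S I) I)) (I^k((S I) I))`. -/
def Omega (k : ℕ) : Tm := .app (Ipow k SII) (Ipow k SII)

lemma big_S_inv {v : Tm} (h : Big .S v) : v = .S := by cases h; rfl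
lemma big_I_inv {v : Tm} (h : Big .I v) : v = .I := by cases h; rfl

lemma big_SI_inv {v : Tm} (h : Big (.app .S .I) v) : v = .S1 .I := by
  cases h with
  | val hv => exact absurd hv id
  | appI h1 _ => exact Tm.noConfusion (big_S_inv h1)
  | appK h1 => exact Tm.noConfusion (big_S_inv h1)
  | appS h1 => rfl
  | appK1 h1 _ => exact Tm.noConfusion (big_S_inv h1)
  | appS1 h1 => exact Tm.noConfusion (big_S_inv h1)
  | appS2 h1 _ => exact Tm.noConfusion (big_S_inv h1)

lemma big_SII_inv {v : Tm} (h : Big SII v) : v = .S2 .I .I := by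
  cases h with
  | val hv => exact absurd hv id
  | appI h1 _ => exact Tm.noConfusion (big_SI_inv h1)
  | appK h1 => exact Tm.noConfusion (big_SI_inv h1)
  | appS h1 => exact Tm.noConfusion (big_SI_inv h1)
  | appK1 h1 _ => exact Tm.noConfusion (big_SI_inv h1)
  | appS1 h1 =>
      injection big_SI_inv h1 with hr
      subst hr; rfl
  | appS2 h1 _ => exact Tm.noConfusion (big_SI_inv h1)

def Good (a : Tm) : Prop := ∀ w, Big a w → w = .S2 .I .I

lemma goodIapp {t : Tm} (h : Good t) : Good (.app .I t) := by
  intro w hw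
  cases hw with
  | val hv => exact absurd hv id
  | appI _ h2 => exact h _ h2
  | appK h1 => exact Tm.noConfusion (big_I_inv h1)
  | appS h1 => exact Tm.noConfusion (big_I_inv h1)
  | appK1 h1 _ => exact Tm.noConfusion (big_I_inv h1)
  | appS1 h1 => exact Tm.noConfusion (big_I_inv h1)
  | appS2 h1 _ => exact Tm.noConfusion (big_I_inv h1)

lemma goodIpow (k : ℕ) : Good (Ipow k SII) := by
  induction k with
  | zero => exact fun w hw => big_SII_inv hw
  | succ k ih => exact goodIapp ih

lemma noBig : ∀ {t v : Tm}, Big t v → ∀ a b, t = .app a b → Good a → Good b → False := by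
  intro t v h
  induction h with
  | val hv => intro a b ht _ _; subst ht; exact hv
  | appI h1 _ _ _ => intro a b he ha _; cases he; exact Tm.noConfusion (ha _ h1)
  | appK h1 _ => intro a b he ha _; cases he; exact Tm.noConfusion (ha _ h1)
  | appS h1 _ => intro a b he ha _; cases he; exact Tm.noConfusion (ha _ h1)
  | appK1 h1 _ _ _ => intro a b he ha _; cases he; exact Tm.noConfusion (ha _ h1)
  | appS1 h1 _ => intro a b he ha _; cases he; exact Tm.noConfusion (ha _ h1)
  | appS2 h1 h2 _ ih2 =>
      intro a b he ha hb
      cases he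
      have hrq := ha _ h1
      injection hrq with hr hq
      subst hr; subst hq
      exact ih2 _ _ rfl (goodIapp hb) (goodIapp hb)

lemma step_big : ∀ {t t' : Tm}, Step t t' → ∀ {v}, Big t' v → Big t v := by
  intro t t' h
  induction h with
  | appL s hs ih =>
      intro v hb
      cases hb with
      | val hv => exact absurd hv id
      | appI h1 h2 => exact Big.appI (ih h1) h2
      | appK h1 => exact Big.appK (ih h1)
      | appS h1 => exact Big.appS (ih h1)
      | appK1 h1 h2 => exact Big.appK1 (ih h1) h2
      | appS1 h1 => exact Big.appS1 (ih h1)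
      | appS2 h1 h2 => exact Big.appS2 (ih h1) h2
  | beta hl =>
      intro v hb
      cases hl with
      | S t => cases hb with
        | val _ => exact Big.appS (Big.val trivial)
      | S1 t s => cases hb with
        | val _ => exact Big.appS1 (Big.val trivial)
      | S2 t s r => exact Big.appS2 (Big.val trivial) hb
      | K t => cases hb with
        | val _ => exact Big.appK (Big.val trivial)
      | K1 t s => exact Big.appK1 (Big.val trivial) hb
      | I t => exact Big.appI (Big.val trivial) hb

lemma rtg_big {t v : Tm} (h : Relation.ReflTransGen Step t v) (hv : v.IsValue) :
    Big t v := by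
  induction h using Relation.ReflTransGen.head_induction_on with
  | refl => exact Big.val hv
  | head hstep _ ih => exact step_big hstep ih

/-- Every `Ω_k` diverges: no value is reachable from `Ω_k` in the big-step
semantics, and no value is reachable by multi-step small-step reduction. -/
theorem Omega_diverges (k : ℕ) :
    (¬ ∃ v : Tm, v.IsValue ∧ Big (Omega k) v) ∧
    (¬ ∃ v : Tm, v.IsValue ∧ Relation.ReflTransGen Step (Omega k) v) := by
  constructor
  · rintro ⟨v, hv, hb⟩
    exact noBig hb _ _ rfl (goodIpow k) (goodIpow k)
  · rintro ⟨v, hv, hr⟩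
    exact noBig (rtg_big hr hv) _ _ rfl (goodIpow k) (goodIpow k)
end

section
/- The two call-by-value small-step systems for xCL agree on evaluation to values: for every closed term t and every value v, t →* v in the system with rules (a), (b), (c) if and only if t →* v in the system with rules (a1), (a2), (b), (c). -/
/-- Call-by-value big-step semantics `t ⇓ v` of xCL. -/
inductive BigV : Tm → Tm → Prop
  | val {v : Tm} : v.IsValue → BigV v v
  | appI {s t v : Tm} : BigV s .I → BigV t v → BigV (.app s t) v
  | appK {s t w : Tm} : BigV s .K → BigV t w → BigV (.app s t) (.K1 w)
  | appS {s t w : Tm} : BigV s .S → BigV t w → BigV (.app s t) (.S1 w)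
  | appK1 {s t r w v : Tm} : BigV s (.K1 r) → BigV t w → BigV r v → BigV (.app s t) v
  | appS1 {s t r w : Tm} : BigV s (.S1 r) → BigV t w → BigV (.app s t) (.S2 r w)
  | appS2 {s t r q w v : Tm} :
      BigV s (.S2 r q) → BigV t w → BigV (.app (.app r w) (.app q w)) v → BigV (.app s t) v

/-- The original call-by-value small-step system with rules (a), (b), (c). -/
inductive StepA : Tm → Tm → Prop
  | a {t t' : Tm} (s : Tm) : StepA t t' → StepA (.app t s) (.app t' s)
  | b {t s s' : Tm} : t.IsValue → StepA s s' → StepA (.app t s) (.app t s')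
  | c {t s t' : Tm} : s.IsValue → LStep t s t' → StepA (.app t s) t'

/-- The modified call-by-value small-step system with rules (a1), (a2), (b), (c). -/
inductive StepB : Tm → Tm → Prop
  | a1 {t t' s s' : Tm} : StepB t t' → StepB s s' → StepB (.app t s) (.app t' s')
  | a2 {t t' s : Tm} : StepB t t' → s.IsValue → StepB (.app t s) (.app t' s)
  | b {t s s' : Tm} : t.IsValue → StepB s s' → StepB (.app t s) (.app t s')
  | c {t s t' : Tm} : s.IsValue → LStep t s t' → StepB (.app t s) t'

/-!
Both systems are sound and complete for the call-by-value big-step semantics `BigV` on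
values. Soundness: every single step, in either system, is backward-preserved by `BigV`,
because `BigV` of an application only depends on the big-step values of its two parts.
Completeness: a derivation of `s t ⇓ v` is replayed by reducing `s` and `t` to values,
which both systems can do (the second moving both parts at once by (a1)), then firing
rule (c).
-/

open Relation

namespace BigV

theorem isValue {t v : Tm} (h : BigV t v) : v.IsValue := by
  induction h with
  | val h => exact h
  | appI _ _ _ ih | appK1 _ _ _ _ _ ih | appS2 _ _ _ _ _ ih => exact ih
  | appK | appS | appS1 => trivial

theorem app_mono {s s' t t' v : Tm} (hs : ∀ {w}, BigV s' w → BigV s w)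
    (ht : ∀ {w}, BigV t' w → BigV t w) (h : BigV (.app s' t') v) : BigV (.app s t) v := by
  cases h with
  | val h => exact h.elim
  | appI h₁ h₂ => exact .appI (hs h₁) (ht h₂)
  | appK h₁ h₂ => exact .appK (hs h₁) (ht h₂)
  | appS h₁ h₂ => exact .appS (hs h₁) (ht h₂)
  | appK1 h₁ h₂ h₃ => exact .appK1 (hs h₁) (ht h₂) h₃
  | appS1 h₁ h₂ => exact .appS1 (hs h₁) (ht h₂)
  | appS2 h₁ h₂ h₃ => exact .appS2 (hs h₁) (ht h₂) h₃

theorem app_of_lStep {f w e v : Tm} (hw : w.IsValue) (hl : LStep f w e) (h : BigV e v) :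
    BigV (.app f w) v := by
  cases hl with
  | S => cases h; exact .appS (.val trivial) (.val hw)
  | S1 => cases h; exact .appS1 (.val trivial) (.val hw)
  | S2 => exact .appS2 (.val trivial) (.val hw) h
  | K => cases h; exact .appK (.val trivial) (.val hw)
  | K1 => exact .appK1 (.val trivial) (.val hw) h
  | I => exact .appI (.val trivial) h

theorem of_stepA {t t' v : Tm} (h : StepA t t') : BigV t' v → BigV t v := by
  induction h generalizing v with
  | a _ _ ih => exact app_mono ih id
  | b _ _ ih => exact app_mono id ih
  | c hs hl => exact app_of_lStep hs hl

theorem of_stepB {t t' v : Tm} (h : StepB t t') : BigV t' v → BigV t v := by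
  induction h generalizing v with
  | a1 _ _ ih₁ ih₂ => exact app_mono ih₁ ih₂
  | a2 _ _ ih => exact app_mono ih id
  | b _ _ ih => exact app_mono id ih
  | c hs hl => exact app_of_lStep hs hl

theorem of_reflTransGen {R : Tm → Tm → Prop} (hR : ∀ {t t' v}, R t t' → BigV t' v → BigV t v)
    {t v : Tm} (h : ReflTransGen R t v) (hv : v.IsValue) : BigV t v := by
  induction h using ReflTransGen.head_induction_on with
  | refl => exact .val hv
  | head hstep _ ih => exact hR hstep ih

theorem reflTransGen {R : Tm → Tm → Prop}
    (happ : ∀ {s s' t t'}, ReflTransGen R s s' → s'.IsValue → ReflTransGen R t t' →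
      t'.IsValue → ReflTransGen R (.app s t) (.app s' t'))
    (hc : ∀ {f w e}, w.IsValue → LStep f w e → R (.app f w) e)
    {t v : Tm} (h : BigV t v) : ReflTransGen R t v := by
  induction h with
  | val => exact .refl
  | appI _ h₂ ih₁ ih₂ => exact (happ ih₁ trivial ih₂ h₂.isValue).tail (hc h₂.isValue (.I _))
  | appK _ h₂ ih₁ ih₂ => exact (happ ih₁ trivial ih₂ h₂.isValue).tail (hc h₂.isValue (.K _))
  | appS _ h₂ ih₁ ih₂ => exact (happ ih₁ trivial ih₂ h₂.isValue).tail (hc h₂.isValue (.S _))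
  | appK1 _ h₂ _ ih₁ ih₂ ih₃ =>
    exact ((happ ih₁ trivial ih₂ h₂.isValue).tail (hc h₂.isValue (.K1 _ _))).trans ih₃
  | appS1 _ h₂ ih₁ ih₂ =>
    exact (happ ih₁ trivial ih₂ h₂.isValue).tail (hc h₂.isValue (.S1 _ _))
  | appS2 _ h₂ _ ih₁ ih₂ ih₃ =>
    exact ((happ ih₁ trivial ih₂ h₂.isValue).tail (hc h₂.isValue (.S2 _ _ _))).trans ih₃

end BigV

theorem StepA.reflTransGen_app {s s' t t' : Tm} (hs : ReflTransGen StepA s s')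
    (hs' : s'.IsValue) (ht : ReflTransGen StepA t t') :
    ReflTransGen StepA (.app s t) (.app s' t') :=
  (hs.lift (Tm.app · t) fun _ _ h => .a t h).trans (ht.lift (Tm.app s') fun _ _ h => .b hs' h)

/-- Without rule (a), `s` cannot move alone while `t` is not a value: the two move together
by (a1) until `t` is done. -/
theorem StepB.reflTransGen_app {s s' t t' : Tm} (hs : ReflTransGen StepB s s') (hs' : s'.IsValue)
    (ht : ReflTransGen StepB t t') (ht' : t'.IsValue) :
    ReflTransGen StepB (.app s t) (.app s' t') := by
  induction hs using ReflTransGen.head_induction_on generalizing t with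
  | refl => exact ht.lift (Tm.app s') fun _ _ h => .b hs' h
  | head hstep _ ih =>
    rcases ht.cases_head with rfl | ⟨t₁, ht₁, ht₂⟩
    · exact .head (.a2 hstep ht') (ih .refl)
    · exact .head (.a1 hstep ht₁) (ih ht₂)

/-- The two call-by-value small-step systems for xCL agree on evaluation to
values: `t →* v` in system (a)(b)(c) iff `t →* v` in system (a1)(a2)(b)(c). -/
theorem xCL_cbv_systems_agree_on_values (t v : Tm) (hv : v.IsValue) :
    Relation.ReflTransGen StepA t v ↔ Relation.ReflTransGen StepB t v := by
  constructor
  · intro h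
    exact (BigV.of_reflTransGen BigV.of_stepA h hv).reflTransGen
      StepB.reflTransGen_app StepB.c
  · intro h
    exact (BigV.of_reflTransGen BigV.of_stepB h hv).reflTransGen
      (fun hs hs' ht _ => StepA.reflTransGen_app hs hs' ht) StepA.c
end

section
/- For every closed term t of the original xCL signature (containing no occurrence of ◐ or ∘) and every value v: t ⇓ v in the extended (pretty-big-step style) big-step semantics with ◐ and ∘ if and only if t ⇓ v in the call-by-value big-step semantics of xCL. -/
/-- Terms of xCL extended with the auxiliary operators `◐` (`half`) and `∘` (`comp`). -/
inductive ETm : Type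
  | S : ETm
  | K : ETm
  | I : ETm
  | S1 : ETm → ETm
  | K1 : ETm → ETm
  | S2 : ETm → ETm → ETm
  | app : ETm → ETm → ETm
  | half : ETm → ETm → ETm
  | comp : ETm → ETm → ETm

/-- Values of the extended language. -/
def ETm.IsValue : ETm → Prop
  | .app _ _ => False
  | .half _ _ => False
  | .comp _ _ => False
  | _ => True

/-- Extended (pretty-big-step style) big-step semantics with `◐` and `∘`. -/
inductive EBig : ETm → ETm → Prop
  | val {v : ETm} : v.IsValue → EBig v v
  | app {s t w v : ETm} : EBig s w → EBig (.half w t) v → EBig (.app s t) v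
  | half {s t w v : ETm} : EBig t w → EBig (.comp s w) v → EBig (.half s t) v
  | compI {s t v : ETm} : EBig s .I → EBig t v → EBig (.comp s t) v
  | compK {s t : ETm} : EBig s .K → EBig (.comp s t) (.K1 t)
  | compS {s t : ETm} : EBig s .S → EBig (.comp s t) (.S1 t)
  | compK1 {s t r v : ETm} : EBig s (.K1 r) → EBig r v → EBig (.comp s t) v
  | compS1 {s t r : ETm} : EBig s (.S1 r) → EBig (.comp s t) (.S2 r t)
  | compS2 {s t r q v : ETm} :
      EBig s (.S2 r q) → EBig (.app (.app r t) (.app q t)) v → EBig (.comp s t) v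

/-- Embedding of original xCL terms (containing no `◐` or `∘`) into the
extended language. -/
def emb : Tm → ETm
  | .S => .S
  | .K => .K
  | .I => .I
  | .S1 t => .S1 (emb t)
  | .K1 t => .K1 (emb t)
  | .S2 t s => .S2 (emb t) (emb s)
  | .app t s => .app (emb t) (emb s)


/-- An inverse of `emb` on its image. -/
def unemb : ETm → Tm
  | .S => .S
  | .K => .K
  | .I => .I
  | .S1 t => .S1 (unemb t)
  | .K1 t => .K1 (unemb t)
  | .S2 t s => .S2 (unemb t) (unemb s)
  | .app t s => .app (unemb t) (unemb s)
  | .half _ _ => .I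
  | .comp _ _ => .I

lemma unemb_emb (t : Tm) : unemb (emb t) = t := by
  induction t <;> simp [emb, unemb, *]

lemma emb_inj {a b : Tm} (h : emb a = emb b) : a = b := by
  have := congrArg unemb h
  simpa [unemb_emb] using this

lemma isValue_emb (t : Tm) : (emb t).IsValue ↔ t.IsValue := by
  cases t <;> simp [emb, Tm.IsValue, ETm.IsValue]

lemma bigV_value {t v : Tm} (h : BigV t v) : v.IsValue := by
  induction h <;> first | assumption | trivial

lemma eBig_value {v w : ETm} (hv : v.IsValue) (h : EBig v w) : w = v := by
  cases h <;> first | rfl | exact hv.elim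

lemma emb_eq_I {a : Tm} (h : emb a = .I) : a = .I := by
  cases a <;> simp_all [emb]

lemma emb_eq_K {a : Tm} (h : emb a = .K) : a = .K := by
  cases a <;> simp_all [emb]

lemma emb_eq_S {a : Tm} (h : emb a = .S) : a = .S := by
  cases a <;> simp_all [emb]

lemma emb_eq_K1 {a : Tm} {r : ETm} (h : emb a = .K1 r) :
    ∃ r', a = .K1 r' ∧ r = emb r' := by
  cases a <;> simp [emb] at h
  exact ⟨_, rfl, h.symm⟩

lemma emb_eq_S1 {a : Tm} {r : ETm} (h : emb a = .S1 r) :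
    ∃ r', a = .S1 r' ∧ r = emb r' := by
  cases a <;> simp [emb] at h
  exact ⟨_, rfl, h.symm⟩

lemma emb_eq_S2 {a : Tm} {r q : ETm} (h : emb a = .S2 r q) :
    ∃ r' q', a = .S2 r' q' ∧ r = emb r' ∧ q = emb q' := by
  cases a <;> simp [emb] at h
  exact ⟨_, _, rfl, h.1.symm, h.2.symm⟩

lemma fwd {e w : ETm} (h : EBig e w) :
    (∀ t : Tm, e = emb t → ∃ v : Tm, w = emb v ∧ BigV t v) ∧
    (∀ (a t : Tm), a.IsValue → e = .half (emb a) (emb t) →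
      ∃ v : Tm, w = emb v ∧ ∀ s : Tm, BigV s a → BigV (.app s t) v) ∧
    (∀ (a b : Tm), a.IsValue → b.IsValue → e = .comp (emb a) (emb b) →
      ∃ v : Tm, w = emb v ∧ ∀ s t : Tm, BigV s a → BigV t b → BigV (.app s t) v) := by
  induction h with
  | val hv =>
    refine ⟨?_, ?_, ?_⟩
    · rintro t rfl
      exact ⟨t, rfl, .val ((isValue_emb t).mp hv)⟩
    · rintro a t _ rfl
      exact hv.elim
    · rintro a b _ _ rfl
      exact hv.elim
  | app h1 h2 ih1 ih2 =>
    refine ⟨?_, ?_, ?_⟩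
    · intro t' ht
      cases t' <;> simp [emb] at ht
      obtain ⟨h1', h2'⟩ := ht
      subst h1'; subst h2'
      obtain ⟨a, rfl, hba⟩ := ih1.1 _ rfl
      obtain ⟨v, hv, hall⟩ := ih2.2.1 a _ (bigV_value hba) rfl
      exact ⟨v, hv, hall _ hba⟩
    · intro a t _ ht; simp at ht
    · intro a b _ _ ht; simp at ht
  | half h1 h2 ih1 ih2 =>
    refine ⟨?_, ?_, ?_⟩
    · intro t' ht; cases t' <;> simp [emb] at ht
    · intro a t0 ha ht
      injection ht with hs ht0
      subst hs; subst ht0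
      obtain ⟨b, rfl, hb⟩ := ih1.1 _ rfl
      obtain ⟨v, hv, hall⟩ := ih2.2.2 a b ha (bigV_value hb) rfl
      exact ⟨v, hv, fun s' hs' => hall s' _ hs' hb⟩
    · intro a b _ _ ht; simp at ht
  | compI h1 h2 ih1 ih2 =>
    refine ⟨?_, ?_, ?_⟩
    · intro t' ht; cases t' <;> simp [emb] at ht
    · intro a t _ ht; simp at ht
    · intro a b ha hb ht
      injection ht with hs ht0
      subst hs; subst ht0
      have hai : emb a = ETm.I := (eBig_value ((isValue_emb a).mpr ha) h1).symm
      obtain rfl := emb_eq_I hai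
      have hvb := eBig_value ((isValue_emb b).mpr hb) h2
      exact ⟨b, hvb, fun s t hs' ht' => .appI hs' ht'⟩
  | compK h1 ih1 =>
    refine ⟨?_, ?_, ?_⟩
    · intro t' ht; cases t' <;> simp [emb] at ht
    · intro a t _ ht; simp at ht
    · intro a b ha hb ht
      injection ht with hs ht0
      subst hs; subst ht0
      have hak : emb a = ETm.K := (eBig_value ((isValue_emb a).mpr ha) h1).symm
      obtain rfl := emb_eq_K hak
      exact ⟨.K1 b, rfl, fun s t hs' ht' => .appK hs' ht'⟩
  | compS h1 ih1 =>
    refine ⟨?_, ?_, ?_⟩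
    · intro t' ht; cases t' <;> simp [emb] at ht
    · intro a t _ ht; simp at ht
    · intro a b ha hb ht
      injection ht with hs ht0
      subst hs; subst ht0
      have has : emb a = ETm.S := (eBig_value ((isValue_emb a).mpr ha) h1).symm
      obtain rfl := emb_eq_S has
      exact ⟨.S1 b, rfl, fun s t hs' ht' => .appS hs' ht'⟩
  | compK1 h1 h2 ih1 ih2 =>
    refine ⟨?_, ?_, ?_⟩
    · intro t' ht; cases t' <;> simp [emb] at ht
    · intro a t _ ht; simp at ht
    · intro a b ha hb ht
      injection ht with hs ht0
      subst hs; subst ht0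
      have hak : emb a = ETm.K1 _ := (eBig_value ((isValue_emb a).mpr ha) h1).symm
      obtain ⟨r', rfl, hr⟩ := emb_eq_K1 hak
      subst hr
      obtain ⟨v', hv, hrv⟩ := ih2.1 _ rfl
      exact ⟨v', hv, fun s t hs' ht' => .appK1 hs' ht' hrv⟩
  | compS1 h1 ih1 =>
    refine ⟨?_, ?_, ?_⟩
    · intro t' ht; cases t' <;> simp [emb] at ht
    · intro a t _ ht; simp at ht
    · intro a b ha hb ht
      injection ht with hs ht0
      subst hs; subst ht0
      have has : emb a = ETm.S1 _ := (eBig_value ((isValue_emb a).mpr ha) h1).symm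
      obtain ⟨r', rfl, hr⟩ := emb_eq_S1 has
      subst hr
      exact ⟨.S2 r' b, rfl, fun s t hs' ht' => .appS1 hs' ht'⟩
  | compS2 h1 h2 ih1 ih2 =>
    refine ⟨?_, ?_, ?_⟩
    · intro t' ht; cases t' <;> simp [emb] at ht
    · intro a t _ ht; simp at ht
    · intro a b ha hb ht
      injection ht with hs ht0
      subst hs; subst ht0
      have has : emb a = ETm.S2 _ _ := (eBig_value ((isValue_emb a).mpr ha) h1).symm
      obtain ⟨r', q', rfl, hr, hq⟩ := emb_eq_S2 has
      subst hr; subst hq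
      obtain ⟨v', hv, hbig⟩ := ih2.1 (.app (.app r' b) (.app q' b)) rfl
      exact ⟨v', hv, fun s t hs' ht' => .appS2 hs' ht' hbig⟩

lemma bwd {t v : Tm} (h : BigV t v) : EBig (emb t) (emb v) := by
  induction h with
  | val hv => exact .val ((isValue_emb _).mpr hv)
  | appI h1 h2 ih1 ih2 =>
    exact .app ih1 (.half ih2 (.compI (.val trivial)
      (.val ((isValue_emb _).mpr (bigV_value h2)))))
  | appK h1 h2 ih1 ih2 =>
    exact .app ih1 (.half ih2 (.compK (.val trivial)))
  | appS h1 h2 ih1 ih2 =>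
    exact .app ih1 (.half ih2 (.compS (.val trivial)))
  | appK1 h1 h2 h3 ih1 ih2 ih3 =>
    exact .app ih1 (.half ih2 (.compK1 (.val trivial) ih3))
  | appS1 h1 h2 ih1 ih2 =>
    exact .app ih1 (.half ih2 (.compS1 (.val trivial)))
  | appS2 h1 h2 h3 ih1 ih2 ih3 =>
    exact .app ih1 (.half ih2 (.compS2 (.val trivial) ih3))

/-- On terms of the original xCL signature, the extended (pretty-big-step
style) big-step semantics with `◐` and `∘` agrees with the call-by-value
big-step semantics of xCL. -/
theorem extended_big_agrees_with_cbv_big (t v : Tm) (hv : v.IsValue) :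
    EBig (emb t) (emb v) ↔ BigV t v := by
  constructor
  · intro h
    obtain ⟨v', hv', hb⟩ := (fwd h).1 t rfl
    obtain rfl := emb_inj hv'
    exact hb
  · exact bwd
end
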